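/- Let R, A1, A2, B be commutative Noetherian rings fitting into a Cartesian (pullback) square with maps ψ1: R → A1, ψ2: R → A2 and surjections φ1: A1 → B, φ2: A2 → B, such that ker(φ1) = (a1) and ker(φ2) = (a2) are principal ideals. Then the natural map A1 ⊗_R A2 → B is an isomorphism. -/

import Mathlib

/-!
Lifting `(φ1 x, φ2 y)` with `φ1 x = φ2 y` through the Cartesian square shows that `R → A2` is
surjective, so every element of `A1 ⊗[R] A2` has the form `x ⊗ 1` and the natural map sends it
to `φ1 x`. If `φ1 x = 0`, the pair `(x, 0)` lifts to some `r : R`, and then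
`x ⊗ 1 = r • (1 ⊗ 1) = 1 ⊗ 0 = 0`.
-/

open Algebra.TensorProduct

theorem surjective_algebraMap_of_lift {R A1 A2 C : Type*} [CommSemiring R] [Semiring A1]
    [Semiring A2] [Algebra R A1] [Algebra R A2] (f1 : A1 → C) (f2 : A2 → C)
    (hf1 : Function.Surjective f1)
    (hlift : ∀ (x : A1) (y : A2), f1 x = f2 y →
      ∃ r : R, algebraMap R A1 r = x ∧ algebraMap R A2 r = y) :
    Function.Surjective (algebraMap R A2) := by
  intro y
  obtain ⟨x, hx⟩ := hf1 (f2 y)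
  obtain ⟨r, -, hr⟩ := hlift x y hx
  exact ⟨r, hr⟩

theorem productMap_injective_of_lift {R A1 A2 B : Type*} [CommRing R] [Ring A1] [Ring A2]
    [CommRing B] [Algebra R A1] [Algebra R A2] [Algebra R B]
    (φ1 : A1 →ₐ[R] B) (φ2 : A2 →ₐ[R] B) (hψ2 : Function.Surjective (algebraMap R A2))
    (hlift : ∀ x : A1, φ1 x = 0 → ∃ r : R, algebraMap R A1 r = x ∧ algebraMap R A2 r = 0) :
    Function.Injective (productMap φ1 φ2) := by
  rw [injective_iff_map_eq_zero]
  intro t ht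
  obtain ⟨x, rfl⟩ := includeLeft_surjective R A1 hψ2 t
  rw [← AlgHom.comp_apply, productMap_left] at ht
  obtain ⟨r, rfl, hr⟩ := hlift x ht
  rw [includeLeft_apply, tmul_one_eq_one_tmul, hr, TensorProduct.tmul_zero]

theorem tensor_product_of_cartesian_square_general
    (R A1 A2 B : Type*) [CommRing R] [CommRing A1] [CommRing A2] [CommRing B]
    [Algebra R A1] [Algebra R A2] [Algebra R B]
    (φ1 : A1 →ₐ[R] B) (φ2 : A2 →ₐ[R] B)
    (hφ1 : Function.Surjective φ1)
    -- the square is Cartesian: `R` is the fiber product of `A1` and `A2` over `B`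
    (hpullback : ∀ (x : A1) (y : A2), φ1 x = φ2 y →
      ∃! r : R, algebraMap R A1 r = x ∧ algebraMap R A2 r = y) :
    Function.Bijective (Algebra.TensorProduct.productMap φ1 φ2) := by
  have hψ2 := surjective_algebraMap_of_lift φ1 φ2 hφ1 fun x y h ↦ (hpullback x y h).exists
  have hker (x : A1) (hx : φ1 x = 0) :
      ∃ r : R, algebraMap R A1 r = x ∧ algebraMap R A2 r = 0 :=
    (hpullback x 0 (by rw [hx, map_zero])).exists
  refine ⟨productMap_injective_of_lift φ1 φ2 hψ2 hker, fun b ↦ ?_⟩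
  obtain ⟨x, rfl⟩ := hφ1 b
  exact ⟨x ⊗ₜ 1, productMap_left_apply φ1 φ2 x⟩

/-- **Lemma (Cartesian square of Noetherian rings).**
Let `R, A1, A2, B` be commutative Noetherian rings fitting into a Cartesian square
with maps `ψ1 : R → A1`, `ψ2 : R → A2` (the algebra maps) and surjections
`φ1 : A1 → B`, `φ2 : A2 → B` whose kernels are principal.  Then the natural map
`A1 ⊗_R A2 → B` is an isomorphism. -/
theorem tensor_product_of_cartesian_square
    (R A1 A2 B : Type*) [CommRing R] [CommRing A1] [CommRing A2] [CommRing B]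
    [IsNoetherianRing R] [IsNoetherianRing A1] [IsNoetherianRing A2] [IsNoetherianRing B]
    [Algebra R A1] [Algebra R A2] [Algebra R B]
    (φ1 : A1 →ₐ[R] B) (φ2 : A2 →ₐ[R] B)
    (hφ1 : Function.Surjective φ1) (hφ2 : Function.Surjective φ2)
    (a1 : A1) (a2 : A2)
    (hker1 : RingHom.ker (φ1 : A1 →+* B) = Ideal.span {a1})
    (hker2 : RingHom.ker (φ2 : A2 →+* B) = Ideal.span {a2})
    -- the square is Cartesian: `R` is the fiber product of `A1` and `A2` over `B`
    (hpullback : ∀ (x : A1) (y : A2), φ1 x = φ2 y →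
      ∃! r : R, algebraMap R A1 r = x ∧ algebraMap R A2 r = y) :
    Function.Bijective (Algebra.TensorProduct.productMap φ1 φ2) :=
  tensor_product_of_cartesian_square_general R A1 A2 B φ1 φ2 hφ1 hpullback
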